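/- Energy identity for the perturbed 1D RTE: let ε > 0, let σ_s, σ_a ∈ C([0,1]), ξ ∈ C([0,1]), η ∈ C(Ω), and let f ∈ C¹(Ω) satisfy ε v ∂_x f = σ_s(x)(⟨f⟩ − f) − ε² σ_a(x) f + ε² ξ(x) + ε η(x,v) on Ω. Then (ε/2)∫_{−1}^{1} v ( f(1,v)² − f(0,v)² ) dv + ∫₀¹ σ_s(x) ∫_{−1}^{1} ( f(x,v) − ⟨f⟩(x) )² dv dx + ε² ∫₀¹∫_{−1}^{1} σ_a(x) f(x,v)² dv dx = ε² ∫₀¹∫_{−1}^{1} ξ(x) f(x,v) dv dx + ε ∫₀¹∫_{−1}^{1} η(x,v) f(x,v) dv dx. -/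

import Mathlib

/-!
Multiply the equation by `f` and integrate over `Ω`. Integrating first in `x`, the transport term
`ε v f ∂ₓf = (ε v / 2) ∂ₓ(f²)` yields the boundary flux; integrating first in `v`, the scattering
term gives `∫ (⟨f⟩ - f) f dv = -∫ (f - ⟨f⟩)² dv` since `f - ⟨f⟩` has velocity average zero.
All integrands are continuous on the compact rectangle, which justifies Fubini and the splitting
of the integrals.
-/

open MeasureTheory Set Function

/-- Velocity average `⟨h⟩(x) = (1/2)∫_{-1}^{1} h(x,v) dv`. -/
noncomputable def vavg (h : ℝ → ℝ → ℝ) (x : ℝ) : ℝ := (1/2) * ∫ v in (-1:ℝ)..1, h x v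

section Rectangle

variable {a b c d : ℝ} {g : ℝ → ℝ → ℝ}

theorem continuousOn_intervalIntegral_of_continuousOn_uncurry (hab : a ≤ b) (hcd : c ≤ d)
    (hg : ContinuousOn (uncurry g) (Icc a b ×ˢ Icc c d)) :
    ContinuousOn (fun x => ∫ v in c..d, g x v) (Icc a b) := by
  set g' : ℝ → ℝ → ℝ := fun x v => g (projIcc a b hab x) (projIcc c d hcd v)
  have hg' : Continuous (uncurry g') :=
    hg.comp_continuous
      (f := fun p : ℝ × ℝ => ((projIcc a b hab p.1 : ℝ), (projIcc c d hcd p.2 : ℝ))) (by fun_prop) fun p => ⟨(projIcc a b hab p.1).2, (projIcc c d hcd p.2).2⟩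
  refine (intervalIntegral.continuous_parametric_intervalIntegral_of_continuous' hg' c d)
    |>.continuousOn.congr fun x hx => intervalIntegral.integral_congr fun v hv => ?_
  rw [uIcc_of_le hcd] at hv
  simp [g', projIcc_of_mem _ hx, projIcc_of_mem _ hv]

theorem intervalIntegral_integral_swap_of_continuousOn (hab : a ≤ b) (hcd : c ≤ d)
    (hg : ContinuousOn (uncurry g) (Icc a b ×ˢ Icc c d)) :
    ∫ x in a..b, ∫ v in c..d, g x v = ∫ v in c..d, ∫ x in a..b, g x v := by
  simp only [intervalIntegral.integral_of_le hab, intervalIntegral.integral_of_le hcd]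
  refine integral_integral_swap ?_
  rw [Measure.prod_restrict]
  exact (hg.integrableOn_compact (isCompact_Icc.prod isCompact_Icc)).mono_set
    (prod_mono Ioc_subset_Icc_self Ioc_subset_Icc_self)

end Rectangle

theorem ContinuousOn.comp_fst_prod {α β γ : Type*} [TopologicalSpace α] [TopologicalSpace β]
    [TopologicalSpace γ] {φ : α → γ} {s : Set α} {t : Set β} (hφ : ContinuousOn φ s) :
    ContinuousOn (fun p : α × β => φ p.1) (s ×ˢ t) :=
  hφ.comp continuousOn_fst fun _ hp => hp.1

theorem integral_eq_half_mul_sq_sub_sq {a b k : ℝ} {φ ψ : ℝ → ℝ} (hab : a ≤ b)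
    (hφ : ContinuousOn φ (Icc a b)) (hφ' : DifferentiableOn ℝ φ (Ioo a b))
    (hψ : ContinuousOn ψ (Icc a b)) (hψφ : ∀ x ∈ Ioo a b, ψ x = k * deriv φ x * φ x) :
    ∫ x in a..b, ψ x = k / 2 * (φ b ^ 2 - φ a ^ 2) := by
  have hderiv : ∀ x ∈ Ioo a b, HasDerivAt (fun y => k / 2 * φ y ^ 2) (ψ x) x := fun x hx => by
    refine (((hφ'.differentiableAt (isOpen_Ioo.mem_nhds hx)).hasDerivAt.fun_pow 2).const_mul
      (k / 2)).congr_deriv ?_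
    rw [hψφ x hx]
    ring
  rw [intervalIntegral.integral_eq_sub_of_hasDerivAt_of_le hab (by fun_prop) hderiv
    (hψ.intervalIntegrable_of_Icc hab)]
  ring

section VelocityAverage

variable {h : ℝ → ℝ → ℝ} {x : ℝ}

theorem integral_sub_vavg (hh : IntervalIntegrable (h x) volume (-1) 1) :
    ∫ v in (-1:ℝ)..1, (h x v - vavg h x) = 0 := by
  rw [intervalIntegral.integral_sub hh intervalIntegrable_const, intervalIntegral.integral_const,
    vavg, smul_eq_mul]
  ring

theorem integral_vavg_sub_mul_self (hh : IntervalIntegrable (h x) volume (-1) 1)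
    (hh2 : IntervalIntegrable (fun v => h x v ^ 2) volume (-1) 1) :
    ∫ v in (-1:ℝ)..1, (vavg h x - h x v) * h x v = -∫ v in (-1:ℝ)..1, (h x v - vavg h x) ^ 2 := by
  have hsq : IntervalIntegrable (fun v => (h x v - vavg h x) ^ 2) volume (-1) 1 := by
    have hexp : (fun v => (h x v - vavg h x) ^ 2)
        = fun v => h x v ^ 2 - 2 * vavg h x * h x v + vavg h x ^ 2 := by
      ext v; ring
    rw [hexp]
    exact (hh2.sub (hh.const_mul _)).add intervalIntegrable_const
  have hcen : IntervalIntegrable (fun v => h x v - vavg h x) volume (-1) 1 :=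
    hh.sub intervalIntegrable_const
  calc ∫ v in (-1:ℝ)..1, (vavg h x - h x v) * h x v
      = ∫ v in (-1:ℝ)..1, (-(h x v - vavg h x) ^ 2 - vavg h x * (h x v - vavg h x)) :=
        intervalIntegral.integral_congr fun v _ => by ring
    _ = -∫ v in (-1:ℝ)..1, (h x v - vavg h x) ^ 2 := by
        rw [intervalIntegral.integral_sub (f := fun v => -(h x v - vavg h x) ^ 2) hsq.neg
            (hcen.const_mul _), intervalIntegral.integral_neg, intervalIntegral.integral_const_mul,
          integral_sub_vavg hh, mul_zero, sub_zero]

theorem continuousOn_vavg {a b : ℝ} (hab : a ≤ b)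
    (hh : ContinuousOn (uncurry h) (Icc a b ×ˢ Icc (-1) 1)) :
    ContinuousOn (vavg h) (Icc a b) :=
  continuousOn_const.mul
    (continuousOn_intervalIntegral_of_continuousOn_uncurry hab (by norm_num) hh)

end VelocityAverage

section RTE

variable (ε : ℝ) (σs σa ξ : ℝ → ℝ) (η f : ℝ → ℝ → ℝ)

noncomputable def rteSource (x v : ℝ) : ℝ :=
  σs x * (vavg f x - f x v) - ε ^ 2 * σa x * f x v + ε ^ 2 * ξ x + ε * η x v

variable {ε σs σa ξ η f}

theorem continuousOn_rteSource (hσs : ContinuousOn σs (Icc 0 1))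
    (hσa : ContinuousOn σa (Icc 0 1)) (hξ : ContinuousOn ξ (Icc 0 1))
    (hη : ContinuousOn (uncurry η) (Icc (0:ℝ) 1 ×ˢ Icc (-1:ℝ) 1))
    (hf : ContinuousOn (uncurry f) (Icc (0:ℝ) 1 ×ˢ Icc (-1:ℝ) 1)) :
    ContinuousOn (uncurry (rteSource ε σs σa ξ η f)) (Icc (0:ℝ) 1 ×ˢ Icc (-1:ℝ) 1) :=
  ((((hσs.comp_fst_prod.mul ((continuousOn_vavg zero_le_one hf).comp_fst_prod.sub hf)).sub
    ((continuousOn_const.mul hσa.comp_fst_prod).mul hf)).add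
    (continuousOn_const.mul hξ.comp_fst_prod)).add (continuousOn_const.mul hη))

theorem integral_rteSource_mul_self {x : ℝ} (hfx : ContinuousOn (f x) (Icc (-1) 1))
    (hηx : ContinuousOn (η x) (Icc (-1) 1)) :
    ∫ v in (-1:ℝ)..1, rteSource ε σs σa ξ η f x v * f x v
      = -(σs x * ∫ v in (-1:ℝ)..1, (f x v - vavg f x) ^ 2)
        - ε ^ 2 * (∫ v in (-1:ℝ)..1, σa x * f x v ^ 2)
        + ε ^ 2 * (∫ v in (-1:ℝ)..1, ξ x * f x v)
        + ε * (∫ v in (-1:ℝ)..1, η x v * f x v) := by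
  have hint : ∀ {φ : ℝ → ℝ}, ContinuousOn φ (Icc (-1) 1) → IntervalIntegrable φ volume (-1) 1 :=
    fun hφ => hφ.intervalIntegrable_of_Icc (by norm_num)
  calc ∫ v in (-1:ℝ)..1, rteSource ε σs σa ξ η f x v * f x v
      = ∫ v in (-1:ℝ)..1, (σs x * ((vavg f x - f x v) * f x v) - ε ^ 2 * (σa x * f x v ^ 2)
          + ε ^ 2 * (ξ x * f x v) + ε * (η x v * f x v)) :=
        intervalIntegral.integral_congr fun v _ => by simp only [rteSource]; ring
    _ = σs x * (∫ v in (-1:ℝ)..1, (vavg f x - f x v) * f x v)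
        - ε ^ 2 * (∫ v in (-1:ℝ)..1, σa x * f x v ^ 2)
        + ε ^ 2 * (∫ v in (-1:ℝ)..1, ξ x * f x v)
        + ε * (∫ v in (-1:ℝ)..1, η x v * f x v) := by
      rw [intervalIntegral.integral_add, intervalIntegral.integral_add, intervalIntegral.integral_sub]
      · simp only [intervalIntegral.integral_const_mul]
      all_goals exact hint (by fun_prop)
    _ = _ := by rw [integral_vavg_sub_mul_self (hint hfx) (hint (hfx.pow 2))]; ring

theorem integral_integral_rteSource_mul_self (hσs : ContinuousOn σs (Icc 0 1))
    (hσa : ContinuousOn σa (Icc 0 1)) (hξ : ContinuousOn ξ (Icc 0 1))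
    (hη : ContinuousOn (uncurry η) (Icc (0:ℝ) 1 ×ˢ Icc (-1:ℝ) 1))
    (hf : ContinuousOn (uncurry f) (Icc (0:ℝ) 1 ×ˢ Icc (-1:ℝ) 1)) :
    ∫ x in (0:ℝ)..1, ∫ v in (-1:ℝ)..1, rteSource ε σs σa ξ η f x v * f x v
      = -(∫ x in (0:ℝ)..1, σs x * ∫ v in (-1:ℝ)..1, (f x v - vavg f x) ^ 2)
        - ε ^ 2 * (∫ x in (0:ℝ)..1, ∫ v in (-1:ℝ)..1, σa x * f x v ^ 2)
        + ε ^ 2 * (∫ x in (0:ℝ)..1, ∫ v in (-1:ℝ)..1, ξ x * f x v)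
        + ε * (∫ x in (0:ℝ)..1, ∫ v in (-1:ℝ)..1, η x v * f x v) := by
  have hJ : ∀ {g : ℝ → ℝ → ℝ}, ContinuousOn (uncurry g) (Icc (0:ℝ) 1 ×ˢ Icc (-1:ℝ) 1) →
      ContinuousOn (fun x => ∫ v in (-1:ℝ)..1, g x v) (Icc 0 1) :=
    continuousOn_intervalIntegral_of_continuousOn_uncurry zero_le_one (by norm_num)
  have hJ1 := hJ (g := fun x v => (f x v - vavg f x) ^ 2)
    (by exact (hf.sub (continuousOn_vavg zero_le_one hf).comp_fst_prod).pow 2)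
  have hJ2 := hJ (g := fun x v => σa x * f x v ^ 2) (by exact hσa.comp_fst_prod.mul (hf.pow 2))
  have hJ3 := hJ (g := fun x v => ξ x * f x v) (hξ.comp_fst_prod.mul hf)
  have hJ4 := hJ (g := fun x v => η x v * f x v) (hη.mul hf)
  calc ∫ x in (0:ℝ)..1, ∫ v in (-1:ℝ)..1, rteSource ε σs σa ξ η f x v * f x v
      = ∫ x in (0:ℝ)..1, (-(σs x * ∫ v in (-1:ℝ)..1, (f x v - vavg f x) ^ 2)
          - ε ^ 2 * (∫ v in (-1:ℝ)..1, σa x * f x v ^ 2)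
          + ε ^ 2 * (∫ v in (-1:ℝ)..1, ξ x * f x v)
          + ε * (∫ v in (-1:ℝ)..1, η x v * f x v)) :=
        intervalIntegral.integral_congr fun x hx => by
          rw [uIcc_of_le zero_le_one] at hx
          exact integral_rteSource_mul_self (hf.uncurry_left x hx) (hη.uncurry_left x hx)
    _ = _ := by
      rw [intervalIntegral.integral_add, intervalIntegral.integral_add,
        intervalIntegral.integral_sub, intervalIntegral.integral_neg]
      · simp only [intervalIntegral.integral_const_mul]
      all_goals exact ContinuousOn.intervalIntegrable_of_Icc zero_le_one (by fun_prop)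

theorem integral_integral_rteSource_mul_self_eq_flux
    (hf : ContDiffOn ℝ 1 (uncurry f) (Icc (0:ℝ) 1 ×ˢ Icc (-1:ℝ) 1))
    (hsrc : ContinuousOn (uncurry (rteSource ε σs σa ξ η f)) (Icc (0:ℝ) 1 ×ˢ Icc (-1:ℝ) 1))
    (hpde : ∀ x ∈ Icc (0:ℝ) 1, ∀ v ∈ Icc (-1:ℝ) 1,
      ε * v * deriv (fun y => f y v) x = rteSource ε σs σa ξ η f x v) :
    ∫ x in (0:ℝ)..1, ∫ v in (-1:ℝ)..1, rteSource ε σs σa ξ η f x v * f x v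
      = ε / 2 * ∫ v in (-1:ℝ)..1, v * (f 1 v ^ 2 - f 0 v ^ 2) := by
  rw [intervalIntegral_integral_swap_of_continuousOn zero_le_one (by norm_num)
    (by exact hsrc.mul hf.continuousOn), ← intervalIntegral.integral_const_mul]
  refine intervalIntegral.integral_congr fun v hv => ?_
  rw [uIcc_of_le (by norm_num)] at hv
  have hsec : ContDiffOn ℝ 1 (fun y => f y v) (Icc 0 1) :=
    hf.comp (contDiffOn_id.prodMk contDiffOn_const) fun y hy => ⟨hy, hv⟩
  rw [integral_eq_half_mul_sq_sub_sq (k := ε * v) zero_le_one hsec.continuousOn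
    ((hsec.differentiableOn one_ne_zero).mono Ioo_subset_Icc_self)
    (by exact (hsrc.uncurry_right v hv).mul hsec.continuousOn)
    fun x hx => by rw [hpde x (Ioo_subset_Icc_self hx) v hv]]
  ring

end RTE

theorem energy_identity_perturbed_rte_general (ε : ℝ)
    (σs σa ξ : ℝ → ℝ) (η f : ℝ → ℝ → ℝ)
    (hσs : ContinuousOn σs (Icc 0 1)) (hσa : ContinuousOn σa (Icc 0 1))
    (hξ : ContinuousOn ξ (Icc 0 1))
    (hη : ContinuousOn (uncurry η) (Icc (0:ℝ) 1 ×ˢ Icc (-1:ℝ) 1))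
    (hf : ContDiffOn ℝ 1 (uncurry f) (Icc (0:ℝ) 1 ×ˢ Icc (-1:ℝ) 1))
    (hpde : ∀ x ∈ Icc (0:ℝ) 1, ∀ v ∈ Icc (-1:ℝ) 1,
      ε * v * deriv (fun y => f y v) x
        = σs x * (vavg f x - f x v) - ε ^ 2 * σa x * f x v + ε ^ 2 * ξ x + ε * η x v) :
    (ε / 2) * (∫ v in (-1:ℝ)..1, v * ((f 1 v) ^ 2 - (f 0 v) ^ 2))
      + (∫ x in (0:ℝ)..1, σs x * ∫ v in (-1:ℝ)..1, (f x v - vavg f x) ^ 2)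
      + ε ^ 2 * (∫ x in (0:ℝ)..1, ∫ v in (-1:ℝ)..1, σa x * (f x v) ^ 2)
      = ε ^ 2 * (∫ x in (0:ℝ)..1, ∫ v in (-1:ℝ)..1, ξ x * f x v)
        + ε * (∫ x in (0:ℝ)..1, ∫ v in (-1:ℝ)..1, η x v * f x v) := by
  have hsrc := continuousOn_rteSource (ε := ε) hσs hσa hξ hη hf.continuousOn
  have h_flux := integral_integral_rteSource_mul_self_eq_flux hf hsrc hpde
  have h_energy := integral_integral_rteSource_mul_self (ε := ε) hσs hσa hξ hη hf.continuousOn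
  linarith

/-- Energy identity for the perturbed 1D RTE: if `f ∈ C¹(Ω)` satisfies
`ε v ∂_x f = σ_s(⟨f⟩ − f) − ε² σ_a f + ε² ξ(x) + ε η(x,v)` on `Ω = [0,1] × [−1,1]`, then
`(ε/2)∫ v (f(1,v)² − f(0,v)²) dv + ∫∫ σ_s (f − ⟨f⟩)² dv dx + ε² ∫∫ σ_a f² dv dx
  = ε² ∫∫ ξ f dv dx + ε ∫∫ η f dv dx`. -/
theorem energy_identity_perturbed_rte (ε : ℝ) (hε : 0 < ε)
    (σs σa ξ : ℝ → ℝ) (η f : ℝ → ℝ → ℝ)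
    (hσs : ContinuousOn σs (Icc 0 1)) (hσa : ContinuousOn σa (Icc 0 1))
    (hξ : ContinuousOn ξ (Icc 0 1))
    (hη : ContinuousOn (uncurry η) (Icc (0:ℝ) 1 ×ˢ Icc (-1:ℝ) 1))
    (hf : ContDiffOn ℝ 1 (uncurry f) (Icc (0:ℝ) 1 ×ˢ Icc (-1:ℝ) 1))
    (hpde : ∀ x ∈ Icc (0:ℝ) 1, ∀ v ∈ Icc (-1:ℝ) 1,
      ε * v * deriv (fun y => f y v) x
        = σs x * (vavg f x - f x v) - ε ^ 2 * σa x * f x v + ε ^ 2 * ξ x + ε * η x v) :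
    (ε / 2) * (∫ v in (-1:ℝ)..1, v * ((f 1 v) ^ 2 - (f 0 v) ^ 2))
      + (∫ x in (0:ℝ)..1, σs x * ∫ v in (-1:ℝ)..1, (f x v - vavg f x) ^ 2)
      + ε ^ 2 * (∫ x in (0:ℝ)..1, ∫ v in (-1:ℝ)..1, σa x * (f x v) ^ 2)
      = ε ^ 2 * (∫ x in (0:ℝ)..1, ∫ v in (-1:ℝ)..1, ξ x * f x v)
        + ε * (∫ x in (0:ℝ)..1, ∫ v in (-1:ℝ)..1, η x v * f x v) :=
  energy_identity_perturbed_rte_general ε σs σa ξ η f hσs hσa hξ hη hf hpde
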